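/- arXiv:2008.13200 — 7 statements merged into one kernel-verified Lean document; each statement's English description precedes it below -/
import Mathlib

section
/- Let x, y be integers, let a : ℕ → ℤ satisfy a(0) = 0, a(1) = 1 and a(n+1) = x·a(n) + y·a(n−1) for all n ≥ 1, and let b, c : ℕ → ℤ both satisfy the same recurrence b(n+1) = x·b(n) + y·b(n−1) and c(n+1) = x·c(n) + y·c(n−1) for all n ≥ 1 (with arbitrary initial values). Then for all natural numbers k and m: b(k)·c(k+m) − b(k+m)·c(k) = (−y)^k · a(m) · (b(0)·c(1) − b(1)·c(0)). -/
theorem generalized_docagne (x y : ℤ) (a b c : ℕ → ℤ)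
    (ha0 : a 0 = 0) (ha1 : a 1 = 1)
    (ha : ∀ n : ℕ, 1 ≤ n → a (n + 1) = x * a n + y * a (n - 1))
    (hb : ∀ n : ℕ, 1 ≤ n → b (n + 1) = x * b n + y * b (n - 1))
    (hc : ∀ n : ℕ, 1 ≤ n → c (n + 1) = x * c n + y * c (n - 1)) :
    ∀ k m : ℕ,
      b k * c (k + m) - b (k + m) * c k =
        (-y) ^ k * a m * (b 0 * c 1 - b 1 * c 0) := by
  have hW : ∀ k : ℕ, b k * c (k + 1) - b (k + 1) * c k
      = (-y) ^ k * (b 0 * c 1 - b 1 * c 0) := by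
    intro k
    induction k with
    | zero => simp
    | succ k ih =>
      have hbk := hb (k + 1) (by omega)
      have hck := hc (k + 1) (by omega)
      simp only [Nat.add_sub_cancel] at hbk hck
      linear_combination b (k + 1) * hck - c (k + 1) * hbk + (-y) * ih
  intro k m
  induction m using Nat.twoStepInduction with
  | zero => simp [ha0]
  | one => rw [ha1]; simpa using hW k
  | more m ih1 ih2 =>
    have hcn := hc (k + m + 1) (by omega)
    have hbn := hb (k + m + 1) (by omega)
    have han := ha (m + 1) (by omega)
    simp only [Nat.add_sub_cancel] at hcn hbn han
    have e1 : k + (m + 2) = k + m + 1 + 1 := by omega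
    have e2 : k + (m + 1) = k + m + 1 := by omega
    rw [e1]
    rw [e2] at ih2
    linear_combination b k * hcn - c k * hbn + x * ih2 + y * ih1
      - (-y) ^ k * (b 0 * c 1 - b 1 * c 0) * han
end

section
/- For all natural numbers m, p, q with m > p, the Fibonacci numbers satisfy (as integers): F(m)·(F(p)·F(q+1) − F(p+1)·F(q)) = F(p)·F(m+q) − F(m+p)·F(q). -/
theorem reduced_docagne_fib (m p q : ℕ) (h : p < m) :
    (Nat.fib m : ℤ) * ((Nat.fib p : ℤ) * Nat.fib (q + 1) - (Nat.fib (p + 1) : ℤ) * Nat.fib q) =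
      (Nat.fib p : ℤ) * Nat.fib (m + q) - (Nat.fib (m + p) : ℤ) * Nat.fib q := by
  obtain ⟨e, rfl⟩ : ∃ e, m = p + e + 1 := ⟨m - p - 1, by omega⟩
  have h1 : p + e + 1 + q = (p + e) + q + 1 := by ring
  have h2 : p + e + 1 + p = (p + e) + p + 1 := by ring
  rw [h1, h2, Nat.fib_add (p+e) q, Nat.fib_add (p+e) p]
  push_cast
  ring
end

section
/- Let x, y be integers, let a : ℕ → ℤ satisfy a(0) = 0, a(1) = 1 and a(n+1) = x·a(n) + y·a(n−1) for all n ≥ 1, and let b : ℕ → ℤ satisfy the same recurrence (with arbitrary initial values). Then for all natural numbers k, m, p, q with k ≤ m and q ≤ p: b(k+p)·a(m+q) − b(m+p)·a(k+q) = (−y)^(k+q) · a(m−k) · b(p−q). -/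
private lemma rec_basis (x y : ℤ) (a : ℕ → ℤ)
    (ha0 : a 0 = 0) (ha1 : a 1 = 1)
    (ha : ∀ n : ℕ, 1 ≤ n → a (n + 1) = x * a n + y * a (n - 1))
    (s : ℕ → ℤ)
    (hs : ∀ n : ℕ, 1 ≤ n → s (n + 1) = x * s n + y * s (n - 1)) :
    ∀ n : ℕ, 1 ≤ n → ∀ p : ℕ, s (p + n) = s (p + 1) * a n + y * s p * a (n - 1) := by
  intro n
  induction n using Nat.strong_induction_on with
  | _ n ih =>
    match n with
    | 0 => intro h; omega
    | 1 => intro _ p; simp [ha0, ha1]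
    | 2 =>
      intro _ p
      have h1 : s (p + 2) = x * s (p + 1) + y * s p := by
        simpa using hs (p + 1) (by omega)
      have h2 : a 2 = x * a 1 + y * a 0 := by simpa using ha 1 (by omega)
      show s (p + 2) = s (p + 1) * a 2 + y * s p * a 1
      rw [h1, h2, ha0, ha1]; ring
    | (n + 3) =>
      intro _ p
      have ih1 : s (p + (n + 1)) = s (p + 1) * a (n + 1) + y * s p * a n :=
        ih (n + 1) (by omega) (by omega) p
      have ih2 : s (p + (n + 2)) = s (p + 1) * a (n + 2) + y * s p * a (n + 1) :=
        ih (n + 2) (by omega) (by omega) p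
      have h1 : s (p + n + 3) = x * s (p + n + 2) + y * s (p + n + 1) := by
        simpa using hs (p + n + 2) (by omega)
      have h2 : a (n + 3) = x * a (n + 2) + y * a (n + 1) := by
        simpa using ha (n + 2) (by omega)
      have h3 : a (n + 2) = x * a (n + 1) + y * a n := by
        simpa using ha (n + 1) (by omega)
      show s (p + n + 3) = s (p + 1) * a (n + 3) + y * s p * a (n + 2)
      have e1 : s (p + (n + 1)) = s (p + n + 1) := by ring_nf
      have e2 : s (p + (n + 2)) = s (p + n + 2) := by ring_nf
      rw [e1] at ih1; rw [e2] at ih2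
      linear_combination h1 + x * ih2 + y * ih1 - s (p + 1) * h2 - y * s p * h3

private lemma rec_cas (x y : ℤ) (a : ℕ → ℤ)
    (ha0 : a 0 = 0) (ha1 : a 1 = 1)
    (ha : ∀ n : ℕ, 1 ≤ n → a (n + 1) = x * a n + y * a (n - 1))
    (s : ℕ → ℤ)
    (hs : ∀ n : ℕ, 1 ≤ n → s (n + 1) = x * s n + y * s (n - 1)) :
    ∀ q p : ℕ, q ≤ p → s p * a (q + 1) - s (p + 1) * a q = (-y) ^ q * s (p - q) := by
  intro q
  induction q with
  | zero => intro p _; simp [ha0, ha1]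
  | succ q ih =>
    intro p hp
    obtain ⟨p', rfl⟩ : ∃ p', p = p' + 1 := ⟨p - 1, by omega⟩
    have h1 : s (p' + 2) = x * s (p' + 1) + y * s p' := by
      simpa using hs (p' + 1) (by omega)
    have h2 : a (q + 2) = x * a (q + 1) + y * a q := by
      simpa using ha (q + 1) (by omega)
    have h3 := ih p' (by omega)
    rw [show p' + 1 - (q + 1) = p' - q from by omega]
    show s (p' + 1) * a (q + 2) - s (p' + 2) * a (q + 1) = (-y) ^ (q + 1) * s (p' - q)
    rw [h1, h2]
    linear_combination (-y) * h3

theorem four_parameter (x y : ℤ) (a b : ℕ → ℤ)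
    (ha0 : a 0 = 0) (ha1 : a 1 = 1)
    (ha : ∀ n : ℕ, 1 ≤ n → a (n + 1) = x * a n + y * a (n - 1))
    (hb : ∀ n : ℕ, 1 ≤ n → b (n + 1) = x * b n + y * b (n - 1)) :
    ∀ k m p q : ℕ, k ≤ m → q ≤ p →
      b (k + p) * a (m + q) - b (m + p) * a (k + q) =
        (-y) ^ (k + q) * a (m - k) * b (p - q) := by
  intro k m p q hkm hqp
  have hW : b p * a (q + 1) - b (p + 1) * a q = (-y) ^ q * b (p - q) :=
    rec_cas x y a ha0 ha1 ha b hb q p hqp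
  rcases Nat.eq_zero_or_pos k with hk | hk
  · subst hk
    rcases Nat.eq_zero_or_pos m with hm | hm
    · subst hm; simp [ha0]
    · have ham : a (q + m) = a (q + 1) * a m + y * a q * a (m - 1) :=
        rec_basis x y a ha0 ha1 ha a ha m hm q
      have hbm : b (p + m) = b (p + 1) * a m + y * b p * a (m - 1) :=
        rec_basis x y a ha0 ha1 ha b hb m hm p
      rw [show m + q = q + m from by omega, show m + p = p + m from by omega,
        show (0 : ℕ) + p = p from by omega, show (0 : ℕ) + q = q from by omega,
        Nat.sub_zero, ham, hbm]
      linear_combination a m * hW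
  · obtain ⟨k', rfl⟩ : ∃ k', k = k' + 1 := ⟨k - 1, by omega⟩
    obtain ⟨m', rfl⟩ : ∃ m', m = m' + 1 := ⟨m - 1, by omega⟩
    have hak : a (q + (k' + 1)) = a (q + 1) * a (k' + 1) + y * a q * a k' :=
      rec_basis x y a ha0 ha1 ha a ha (k' + 1) (by omega) q
    have ham : a (q + (m' + 1)) = a (q + 1) * a (m' + 1) + y * a q * a m' :=
      rec_basis x y a ha0 ha1 ha a ha (m' + 1) (by omega) q
    have hbk : b (p + (k' + 1)) = b (p + 1) * a (k' + 1) + y * b p * a k' :=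
      rec_basis x y a ha0 ha1 ha b hb (k' + 1) (by omega) p
    have hbm : b (p + (m' + 1)) = b (p + 1) * a (m' + 1) + y * b p * a m' :=
      rec_basis x y a ha0 ha1 ha b hb (m' + 1) (by omega) p
    have hC : a m' * a (k' + 1) - a (m' + 1) * a k' = (-y) ^ k' * a (m' - k') :=
      rec_cas x y a ha0 ha1 ha a ha k' m' (by omega)
    rw [show k' + 1 + p = p + (k' + 1) from by omega,
      show m' + 1 + p = p + (m' + 1) from by omega,
      show m' + 1 + q = q + (m' + 1) from by omega,
      show k' + 1 + q = q + (k' + 1) from by omega,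
      show m' + 1 - (k' + 1) = m' - k' from by omega,
      hak, ham, hbk, hbm]
    linear_combination (-y) * (b p * a (q + 1) - b (p + 1) * a q) * hC +
      (-y) * (-y) ^ k' * a (m' - k') * hW
end

section
/- Let L : ℕ → ℤ be the Lucas numbers, defined by L(0) = 2, L(1) = 1 and L(n+2) = L(n+1) + L(n). Then for all natural numbers k, m, p: L(k+p)·F(k+m) − L(k+m+p)·F(k) = (−1)^k · F(m) · L(p), where F(n) is the n-th Fibonacci number viewed in ℤ. -/
lemma fibZ_add (a b : ℕ) :
    (Nat.fib (a + b + 1) : ℤ) = Nat.fib a * Nat.fib b + Nat.fib (a + 1) * Nat.fib (b + 1) := by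
  have := Nat.fib_add a b
  exact_mod_cast congrArg (Nat.cast : ℕ → ℤ) this

lemma fibZ_add' (a b : ℕ) :
    (Nat.fib (a + b) : ℤ) =
      Nat.fib a * Nat.fib (b + 1) + ((Nat.fib (a + 1) : ℤ) - Nat.fib a) * Nat.fib b := by
  have h1 := fibZ_add a b
  have h2 : (Nat.fib (a + b + 2) : ℤ)
      = Nat.fib (a + 1) * Nat.fib b + Nat.fib (a + 2) * Nat.fib (b + 1) := by
    have := fibZ_add (a + 1) b
    have e : a + 1 + b + 1 = a + b + 2 := by ring
    rwa [e] at this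
  have h3 : (Nat.fib (a + b + 2) : ℤ) = Nat.fib (a + b) + Nat.fib (a + b + 1) := by
    exact_mod_cast congrArg (Nat.cast : ℕ → ℤ) (Nat.fib_add_two (n := a + b))
  have h4 : (Nat.fib (a + 2) : ℤ) = Nat.fib a + Nat.fib (a + 1) := by
    exact_mod_cast congrArg (Nat.cast : ℕ → ℤ) (Nat.fib_add_two (n := a))
  linear_combination h2 - h1 - h3 + (Nat.fib (b + 1) : ℤ) * h4

lemma cassiniZ : ∀ k : ℕ,
    (Nat.fib (k + 1) : ℤ) ^ 2 - Nat.fib (k + 1) * Nat.fib k - (Nat.fib k : ℤ) ^ 2 = (-1) ^ k := by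
  intro k
  induction k with
  | zero => simp
  | succ n ih =>
    have h : (Nat.fib (n + 2) : ℤ) = Nat.fib n + Nat.fib (n + 1) := by
      exact_mod_cast congrArg (Nat.cast : ℕ → ℤ) (Nat.fib_add_two (n := n))
    rw [h, pow_succ]
    linear_combination -ih

theorem vajda_fib_lucas (L : ℕ → ℤ)
    (hL0 : L 0 = 2) (hL1 : L 1 = 1)
    (hL : ∀ n : ℕ, L (n + 2) = L (n + 1) + L n) :
    ∀ k m p : ℕ,
      L (k + p) * Nat.fib (k + m) - L (k + m + p) * Nat.fib k =
        (-1) ^ k * Nat.fib m * L p := by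
  have hLf : ∀ n : ℕ, L n = 2 * (Nat.fib (n + 1) : ℤ) - Nat.fib n := by
    intro n
    induction n using Nat.twoStepInduction with
    | zero => simp [hL0]
    | one => simp [hL1]
    | more n ih1 ih2 =>
      have h : (Nat.fib (n + 3) : ℤ) = Nat.fib (n + 1) + Nat.fib (n + 2) := by
        exact_mod_cast congrArg (Nat.cast : ℕ → ℤ) (Nat.fib_add_two (n := n + 1))
      rw [hL, ih1, ih2]
      have h2 : (Nat.fib (n + 2) : ℤ) = Nat.fib n + Nat.fib (n + 1) := by
        exact_mod_cast congrArg (Nat.cast : ℕ → ℤ) (Nat.fib_add_two (n := n))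
      rw [h, h2]; ring
  intro k m p
  rw [hLf (k + p), hLf (k + m + p), hLf p]
  have e1 := fibZ_add' k m
  have e2 := fibZ_add' k p
  have e3 := fibZ_add k p
  have e4 : (Nat.fib (k + m + p) : ℤ) =
      Nat.fib k * Nat.fib (m + p + 1) + ((Nat.fib (k + 1) : ℤ) - Nat.fib k) * Nat.fib (m + p) := by
    have := fibZ_add' k (m + p)
    have e : k + (m + p) = k + m + p := by ring
    rwa [e] at this
  have e5 : (Nat.fib (k + m + p + 1) : ℤ) =
      Nat.fib k * Nat.fib (m + p) + Nat.fib (k + 1) * Nat.fib (m + p + 1) := by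
    have := fibZ_add k (m + p)
    have e : k + (m + p) = k + m + p := by ring
    rwa [e] at this
  have e6 := fibZ_add' m p
  have e7 := fibZ_add m p
  have e8 : (Nat.fib (k + p + 1) : ℤ) =
      Nat.fib k * Nat.fib p + Nat.fib (k + 1) * Nat.fib (p + 1) := fibZ_add k p
  rw [e1, e2, e4, e5, e6, e7, e8]
  have hc := cassiniZ k
  linear_combination (Nat.fib m : ℤ) * (2 * Nat.fib (p + 1) - Nat.fib p) * hc
end

section
/- Let x, y be integers and let a : ℕ → ℤ satisfy a(0) = 0, a(1) = 1 and a(n+1) = x·a(n) + y·a(n−1) for all n ≥ 1. Then for all natural numbers n and r with r ≤ n: a(n)^2 − a(n+r)·a(n−r) = (−y)^(n−r) · a(r)^2. -/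
theorem catalan_like (x y : ℤ) (a : ℕ → ℤ)
    (ha0 : a 0 = 0) (ha1 : a 1 = 1)
    (ha : ∀ n : ℕ, 1 ≤ n → a (n + 1) = x * a n + y * a (n - 1)) :
    ∀ n r : ℕ, r ≤ n →
      a n ^ 2 - a (n + r) * a (n - r) = (-y) ^ (n - r) * a r ^ 2 := by
  have h2 : a 2 = x := by
    have := ha 1 le_rfl; simpa [ha0, ha1] using this
  have hrec : ∀ k : ℕ, a (k + 2) = x * a (k + 1) + y * a k := by
    intro k
    have := ha (k + 1) (by omega)
    simpa using this
  have add : ∀ k m : ℕ, a (m + k + 1) = a (m + 1) * a (k + 1) + y * a m * a k := by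
    intro k
    induction k using Nat.twoStepInduction with
    | zero => intro m; simp [ha1, ha0]
    | one =>
        intro m
        have := hrec m
        rw [show m + 1 + 1 = m + 2 from rfl] at this ⊢
        rw [this, h2, ha1]; ring
    | more k ih1 ih2 =>
        intro m
        have e1 : a (m + (k + 2) + 1) = x * a (m + k + 1 + 1) + y * a (m + k + 1) := by
          have := hrec (m + k + 1)
          convert this using 2 <;> omega
        have e2 := ih1 m
        have e3 : a (m + (k + 1) + 1) = a (m + 1) * a (k + 1 + 1) + y * a m * a (k + 1) := ih2 m
        have e4 : a (m + k + 1 + 1) = a (m + 1) * a (k + 2) + y * a m * a (k + 1) := by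
          convert e3 using 2 <;> omega
        have e5 := hrec (k + 1)
        have e6 := hrec k
        rw [e1, e4, e2, show k + 2 + 1 = k + 1 + 2 from rfl, e5, e6]
        ring
  have det : ∀ k m : ℕ, a (m + k + 1) * a k - a (m + k) * a (k + 1) = -(-y) ^ k * a m := by
    intro k m
    induction k with
    | zero => simp [ha0, ha1]
    | succ k ih =>
        have e1 : a (m + (k + 1) + 1) = x * a (m + k + 1) + y * a (m + k) := by
          have := hrec (m + k)
          convert this using 2 <;> omega
        have e2 : a (m + (k + 1)) = a (m + k + 1) := by rw [show m + (k+1) = m + k + 1 from by omega]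
        have e3 := hrec k
        rw [e1, e2, show k + 1 + 1 = k + 2 from rfl, e3]
        linear_combination (-y) * ih
  intro n r h
  rcases eq_or_lt_of_le h with rfl | hlt
  · simp [Nat.sub_self, ha0]
  · obtain ⟨t, rfl⟩ : ∃ t, n = r + t + 1 := ⟨n - r - 1, by omega⟩
    have hsub : r + t + 1 - r = t + 1 := by omega
    have h1 := add t r
    have h3 := det t r
    have h2' : a (r + t + 1 + r) = a (r + 1) * a (r + t + 1) + y * a r * a (r + t) := by
      have := add (r + t) r
      convert this using 2 <;> omega
    rw [hsub, h2']
    linear_combination a (r + t + 1) * h1 + y * a r * h3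
end

section
/- Let J : ℕ → ℤ be the Jacobsthal numbers, defined by J(0) = 0, J(1) = 1 and J(n+1) = J(n) + 2·J(n−1) for n ≥ 1. Then for all natural numbers n and i with i ≤ n: J(n)^2 − J(n−i)·J(n+i) = (−2)^(n−i) · J(i)^2. -/
theorem catalan_jacobsthal (J : ℕ → ℤ)
    (hJ0 : J 0 = 0) (hJ1 : J 1 = 1)
    (hJ : ∀ n : ℕ, 1 ≤ n → J (n + 1) = J n + 2 * J (n - 1)) :
    ∀ n i : ℕ, i ≤ n →
      J n ^ 2 - J (n - i) * J (n + i) = (-2) ^ (n - i) * J i ^ 2 := by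
  have key : ∀ n : ℕ, 3 * J n = 2 ^ n - (-1) ^ n ∧
      3 * J (n + 1) = 2 ^ (n + 1) - (-1) ^ (n + 1) := by
    intro n
    induction n with
    | zero => norm_num [hJ0, hJ1]
    | succ n ih =>
      refine ⟨ih.2, ?_⟩
      have h := hJ (n + 1) (by omega)
      simp only [Nat.add_sub_cancel] at h
      rw [h]
      have h1 := ih.1
      have h2 := ih.2
      ring_nf
      ring_nf at h1 h2
      linarith
  intro n i h
  obtain ⟨k, rfl⟩ : ∃ k, n = i + k := ⟨n - i, by omega⟩
  have hk : i + k - i = k := by omega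
  rw [hk]
  have e1 := (key (i + k)).1
  have e2 := (key k).1
  have e3 := (key (i + k + i)).1
  have e4 := (key i).1
  have eq9 : 9 * (J (i + k) ^ 2 - J k * J (i + k + i)) = 9 * ((-2) ^ k * J i ^ 2) := by
    have c1 : 9 * (J (i + k) ^ 2 - J k * J (i + k + i)) =
        (3 * J (i + k)) ^ 2 - (3 * J k) * (3 * J (i + k + i)) := by ring
    have c2 : 9 * ((-2 : ℤ) ^ k * J i ^ 2) = (-2) ^ k * (3 * J i) ^ 2 := by ring
    rw [c1, c2, e1, e2, e3, e4]
    have hneg : ((-2 : ℤ)) ^ k = (-1) ^ k * 2 ^ k := by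
      rw [neg_pow]
    rw [hneg]
    ring
  linarith
end

section
/- For all natural numbers k and m with k ≤ m, the Fibonacci numbers satisfy (as integers): F(k+m)^2 − F(m−k)^2 = F(2k)·F(2m). -/
private lemma fib_add_int (k d : ℕ) :
    (Nat.fib (k + d) : ℤ) =
      Nat.fib k * (Nat.fib (d + 1) - Nat.fib d) + Nat.fib (k + 1) * Nat.fib d := by
  cases d with
  | zero => simp
  | succ j =>
      have h : k + (j + 1) = k + j + 1 := by ring
      rw [h, Nat.fib_add]
      have h2 : (j + 1) + 1 = j + 2 := by ring
      rw [h2, Nat.fib_add_two]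
      push_cast
      ring

private lemma cassini_int (k : ℕ) :
    (Nat.fib (k + 1) : ℤ) ^ 2 - Nat.fib k * Nat.fib (k + 2) = (-1 : ℤ) ^ k := by
  induction k with
  | zero => simp
  | succ n ih =>
      have h3 : n + 1 + 2 = (n + 1) + 2 := rfl
      rw [show n + 1 + 2 = n + 3 from rfl]
      have e1 : (Nat.fib (n + 2) : ℤ) = Nat.fib n + Nat.fib (n + 1) := by
        rw [Nat.fib_add_two]; push_cast; ring
      have e2 : (Nat.fib (n + 3) : ℤ) = Nat.fib (n + 1) + Nat.fib (n + 2) := by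
        rw [show n + 3 = (n + 1) + 2 from rfl, Nat.fib_add_two]; push_cast; ring
      rw [e2, e1]
      linear_combination -ih - (Nat.fib n : ℤ) * e1

theorem fib_square_diff (k m : ℕ) (h : k ≤ m) :
    (Nat.fib (k + m) : ℤ) ^ 2 - (Nat.fib (m - k) : ℤ) ^ 2 =
      (Nat.fib (2 * k) : ℤ) * Nat.fib (2 * m) := by
  obtain ⟨d, rfl⟩ : ∃ d, m = k + d := ⟨m - k, (Nat.add_sub_cancel' h).symm⟩
  have hdk : k + d - k = d := by omega
  rw [hdk]
  set a : ℤ := (Nat.fib k : ℤ) with ha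
  set b : ℤ := (Nat.fib (k + 1) : ℤ) with hb
  set c : ℤ := (Nat.fib d : ℤ) with hc
  set e : ℤ := (Nat.fib (d + 1) : ℤ) with he
  have hA : (Nat.fib (k + d) : ℤ) = a * (e - c) + b * c := fib_add_int k d
  have hB : (Nat.fib (k + d + 1) : ℤ) = b * e + a * c := by
    have := fib_add_int k (d + 1)
    rw [show k + (d + 1) = k + d + 1 from rfl] at this
    rw [this, show d + 1 + 1 = d + 2 from rfl, Nat.fib_add_two]
    push_cast
    ring
  have hKM : (Nat.fib (k + (k + d)) : ℤ) =
      a * ((b * e + a * c) - (a * (e - c) + b * c)) + b * (a * (e - c) + b * c) := by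
    have := fib_add_int k (k + d)
    rw [this, show k + d + 1 = k + d + 1 from rfl, hB, hA]
  have h2k : (Nat.fib (2 * k) : ℤ) = a * (b - a) + b * a := by
    rw [two_mul]; exact fib_add_int k k
  have h2m : (Nat.fib (2 * (k + d)) : ℤ) =
      (a * (e - c) + b * c) * ((b * e + a * c) - (a * (e - c) + b * c)) +
        (b * e + a * c) * (a * (e - c) + b * c) := by
    rw [two_mul]
    have := fib_add_int (k + d) (k + d)
    rw [this, hB, hA]
  have hcas : b ^ 2 - a * (a + b) = (-1 : ℤ) ^ k := by
    have := cassini_int k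
    rw [Nat.fib_add_two] at this
    push_cast at this
    linear_combination this
  have hsq : (b ^ 2 - a * (a + b)) ^ 2 = 1 := by
    rw [hcas, ← pow_mul, mul_comm, pow_mul]
    norm_num
  rw [hKM, h2k, h2m]
  linear_combination c ^ 2 * hsq
end
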